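/- Let (u, ρ) be a smooth, rapidly decreasing solution on [0, T) of the weakly dissipative generalized two-component Novikov system u_t − u_{txx} + (g(u))_x + λ(u − u_{xx}) = k(3 u u_x u_{xx} + u² u_{xxx}) + k ρ (u ρ)_x, ρ_t + k u² ρ_x + k ρ u u_x = 0. Then for all t ∈ [0, T), ∫_ℝ (u² + u_x²)(t, x) dx = e^{-2λt} ∫_ℝ (u₀² + u₀ₓ²)(x) dx, where u₀ = u(0, ·). -/

import Mathlib

open Real MeasureTheory Set

open Filter Topology

/-- Spatial partial derivative of a function of time and space. -/
noncomputable def pdx (u : ℝ → ℝ → ℝ) : ℝ → ℝ → ℝ := fun t x => deriv (fun x' => u t x') x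

/-- Time partial derivative of a function of time and space. -/
noncomputable def pdt (u : ℝ → ℝ → ℝ) : ℝ → ℝ → ℝ := fun t x => deriv (fun t' => u t' x) t

/-- `u(t,·)` and all of its spatial derivatives are rapidly decreasing in `x`,
locally uniformly in `t ∈ [0,T)`. -/
def LocUnifRapidDecay (T : ℝ) (u : ℝ → ℝ → ℝ) : Prop :=
  ∀ (n m : ℕ), ∀ t₀ ∈ Set.Ico (0 : ℝ) T, ∃ ε > 0, ∃ C : ℝ,
    ∀ t ∈ Set.Ico (0 : ℝ) T, |t - t₀| < ε →
      ∀ x : ℝ, |x| ^ n * |iteratedDeriv m (fun x' => u t x') x| ≤ C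

section Toolkit

variable {O : Set (ℝ × ℝ)} {F : ℝ → ℝ → ℝ}

lemma hasDerivAt_slice_x (hO : IsOpen O) (hF : ContDiffOn ℝ (⊤ : ℕ∞) (Function.uncurry F) O)
    {t x : ℝ} (hp : (t, x) ∈ O) :
    HasDerivAt (fun x' => F t x') (fderiv ℝ (Function.uncurry F) (t, x) (0, 1)) x := by
  have hd : DifferentiableAt ℝ (Function.uncurry F) (t, x) :=
    (hF.contDiffAt (hO.mem_nhds hp)).differentiableAt (by simp)
  have hline : HasDerivAt (fun x' : ℝ => ((t, x') : ℝ × ℝ)) ((0 : ℝ), (1 : ℝ)) x := by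
    simpa using (hasDerivAt_const x t).prodMk (hasDerivAt_id x)
  simpa [Function.comp_def] using hd.hasFDerivAt.comp_hasDerivAt x hline

lemma hasDerivAt_slice_t (hO : IsOpen O) (hF : ContDiffOn ℝ (⊤ : ℕ∞) (Function.uncurry F) O)
    {t x : ℝ} (hp : (t, x) ∈ O) :
    HasDerivAt (fun t' => F t' x) (fderiv ℝ (Function.uncurry F) (t, x) (1, 0)) t := by
  have hd : DifferentiableAt ℝ (Function.uncurry F) (t, x) :=
    (hF.contDiffAt (hO.mem_nhds hp)).differentiableAt (by simp)
  have hline : HasDerivAt (fun t' : ℝ => ((t', x) : ℝ × ℝ)) ((1 : ℝ), (0 : ℝ)) t := by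
    simpa using (hasDerivAt_id t).prodMk (hasDerivAt_const t x)
  simpa [Function.comp_def] using hd.hasFDerivAt.comp_hasDerivAt t hline

lemma pdx_slice (hO : IsOpen O) (hF : ContDiffOn ℝ (⊤ : ℕ∞) (Function.uncurry F) O)
    {t x : ℝ} (hp : (t, x) ∈ O) :
    HasDerivAt (fun x' => F t x') (pdx F t x) x := by
  have h := hasDerivAt_slice_x hO hF hp
  simpa only [pdx, h.deriv] using h

lemma pdt_slice (hO : IsOpen O) (hF : ContDiffOn ℝ (⊤ : ℕ∞) (Function.uncurry F) O)
    {t x : ℝ} (hp : (t, x) ∈ O) :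
    HasDerivAt (fun t' => F t' x) (pdt F t x) t := by
  have h := hasDerivAt_slice_t hO hF hp
  simpa only [pdt, h.deriv] using h

lemma contDiffOn_pdx (hO : IsOpen O) (hF : ContDiffOn ℝ (⊤ : ℕ∞) (Function.uncurry F) O) :
    ContDiffOn ℝ (⊤ : ℕ∞) (Function.uncurry (pdx F)) O := by
  have hD : ContDiffOn ℝ (⊤ : ℕ∞) (fderiv ℝ (Function.uncurry F)) O :=
    hF.fderiv_of_isOpen hO (by simp)
  have h2 : ContDiffOn ℝ (⊤ : ℕ∞) (fun p => fderiv ℝ (Function.uncurry F) p ((0 : ℝ), (1 : ℝ))) O :=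
    (ContinuousLinearMap.apply ℝ ℝ ((0 : ℝ), (1 : ℝ))).contDiff.comp_contDiffOn hD
  refine h2.congr fun p hp => ?_
  obtain ⟨t, x⟩ := p
  exact (hasDerivAt_slice_x hO hF hp).deriv

lemma contDiffOn_pdt (hO : IsOpen O) (hF : ContDiffOn ℝ (⊤ : ℕ∞) (Function.uncurry F) O) :
    ContDiffOn ℝ (⊤ : ℕ∞) (Function.uncurry (pdt F)) O := by
  have hD : ContDiffOn ℝ (⊤ : ℕ∞) (fderiv ℝ (Function.uncurry F)) O :=
    hF.fderiv_of_isOpen hO (by simp)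
  have h2 : ContDiffOn ℝ (⊤ : ℕ∞) (fun p => fderiv ℝ (Function.uncurry F) p ((1 : ℝ), (0 : ℝ))) O :=
    (ContinuousLinearMap.apply ℝ ℝ ((1 : ℝ), (0 : ℝ))).contDiff.comp_contDiffOn hD
  refine h2.congr fun p hp => ?_
  obtain ⟨t, x⟩ := p
  exact (hasDerivAt_slice_t hO hF hp).deriv

lemma clairaut (hO : IsOpen O) (hF : ContDiffOn ℝ (⊤ : ℕ∞) (Function.uncurry F) O)
    {t x : ℝ} (hp : (t, x) ∈ O) :
    pdt (pdx F) t x = pdx (pdt F) t x := by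
  set f := Function.uncurry F with hf
  set D := fderiv ℝ f with hDdef
  have hD : ContDiffOn ℝ (⊤ : ℕ∞) D O := hF.fderiv_of_isOpen hO (by simp)
  have hDdiff : DifferentiableAt ℝ D (t, x) :=
    (hD.contDiffAt (hO.mem_nhds hp)).differentiableAt (by simp)
  have hev : ∀ᶠ q in 𝓝 (t, x), HasFDerivAt f (D q) q := by
    filter_upwards [hO.mem_nhds hp] with q hq
    exact ((hF.contDiffAt (hO.mem_nhds hq)).differentiableAt (by simp)).hasFDerivAt
  have hsymm := second_derivative_symmetric_of_eventually hev hDdiff.hasFDerivAt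
  -- compute pdt (pdx F) t x
  have hOx : ∀ x' : ℝ, IsOpen {t' : ℝ | (t', x') ∈ O} := fun x' =>
    hO.preimage (Continuous.prodMk_left x')
  have hOt : IsOpen {x' : ℝ | (t, x') ∈ O} := hO.preimage (Continuous.prodMk_right t)
  have h1 : HasDerivAt (fun t' => pdx F t' x)
      (fderiv ℝ D (t, x) (1, 0) ((0 : ℝ), (1 : ℝ))) t := by
    have hline : HasDerivAt (fun t' : ℝ => ((t', x) : ℝ × ℝ)) ((1 : ℝ), (0 : ℝ)) t := by
      simpa using (hasDerivAt_id t).prodMk (hasDerivAt_const t x)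
    have hcomp : HasDerivAt (fun t' => D (t', x)) (fderiv ℝ D (t, x) (1, 0)) t :=
      hDdiff.hasFDerivAt.comp_hasDerivAt t hline
    have happ : HasDerivAt (fun t' => D (t', x) ((0 : ℝ), (1 : ℝ)))
        (fderiv ℝ D (t, x) (1, 0) ((0 : ℝ), (1 : ℝ))) t := by
      simpa [Function.comp_def] using ((ContinuousLinearMap.apply ℝ ℝ ((0 : ℝ), (1 : ℝ))).hasFDerivAt).comp_hasDerivAt t hcomp
    refine happ.congr_of_eventuallyEq ?_
    filter_upwards [(hOx x).mem_nhds hp] with t' ht'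
    exact ((hasDerivAt_slice_x hO hF ht').deriv)
  have h2 : HasDerivAt (fun x' => pdt F t x')
      (fderiv ℝ D (t, x) (0, 1) ((1 : ℝ), (0 : ℝ))) x := by
    have hline : HasDerivAt (fun x' : ℝ => ((t, x') : ℝ × ℝ)) ((0 : ℝ), (1 : ℝ)) x := by
      simpa using (hasDerivAt_const x t).prodMk (hasDerivAt_id x)
    have hcomp : HasDerivAt (fun x' => D (t, x')) (fderiv ℝ D (t, x) (0, 1)) x :=
      hDdiff.hasFDerivAt.comp_hasDerivAt x hline
    have happ : HasDerivAt (fun x' => D (t, x') ((1 : ℝ), (0 : ℝ)))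
        (fderiv ℝ D (t, x) (0, 1) ((1 : ℝ), (0 : ℝ))) x := by
      simpa [Function.comp_def] using ((ContinuousLinearMap.apply ℝ ℝ ((1 : ℝ), (0 : ℝ))).hasFDerivAt).comp_hasDerivAt x hcomp
    refine happ.congr_of_eventuallyEq ?_
    filter_upwards [hOt.mem_nhds hp] with x' hx'
    exact ((hasDerivAt_slice_t hO hF hx').deriv)
  calc pdt (pdx F) t x = fderiv ℝ D (t, x) (1, 0) ((0 : ℝ), (1 : ℝ)) := h1.deriv
    _ = fderiv ℝ D (t, x) (0, 1) ((1 : ℝ), (0 : ℝ)) := hsymm _ _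
    _ = pdx (pdt F) t x := h2.deriv.symm

end Toolkit


section Decay

variable {T : ℝ} {v : ℝ → ℝ → ℝ}

lemma bound_of_decay (h : LocUnifRapidDecay T v) (n m : ℕ) {t : ℝ} (ht : t ∈ Set.Ico 0 T) :
    ∃ C : ℝ, ∀ x : ℝ, |x| ^ n * |iteratedDeriv m (fun x' => v t x') x| ≤ C := by
  obtain ⟨ε, hε, C, hC⟩ := h n m t ht
  exact ⟨C, fun x => hC t ht (by simpa using hε) x⟩

lemma decay2_of_decay (h : LocUnifRapidDecay T v) (m : ℕ) {t : ℝ} (ht : t ∈ Set.Ico 0 T) :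
    ∃ C : ℝ, ∀ x : ℝ, |iteratedDeriv m (fun x' => v t x') x| ≤ C / (1 + x ^ 2) := by
  obtain ⟨C0, h0⟩ := bound_of_decay h 0 m ht
  obtain ⟨C2, h2⟩ := bound_of_decay h 2 m ht
  refine ⟨C0 + C2, fun x => ?_⟩
  have hx : (0 : ℝ) < 1 + x ^ 2 := by positivity
  rw [le_div_iff₀ hx]
  have h0' := h0 x; have h2' := h2 x
  simp only [pow_zero, one_mul] at h0'
  have : |x| ^ 2 = x ^ 2 := sq_abs x
  nlinarith [abs_nonneg (iteratedDeriv m (fun x' => v t x') x)]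

lemma tendsto_one_add_sq_atTop : Tendsto (fun x : ℝ => 1 + x ^ 2) atTop atTop :=
  tendsto_atTop_add_const_left _ _ (tendsto_pow_atTop (by norm_num : (2:ℕ) ≠ 0))

lemma tendsto_one_add_sq_atBot : Tendsto (fun x : ℝ => 1 + x ^ 2) atBot atTop := by
  apply tendsto_atTop_add_const_left
  have := ((tendsto_pow_atTop (by norm_num : (2:ℕ) ≠ 0)) :
      Tendsto (fun x : ℝ => x ^ 2) atTop atTop).comp tendsto_neg_atBot_atTop
  simpa [Function.comp_def, neg_sq] using this

lemma tendsto_zero_of_decay (h : LocUnifRapidDecay T v) (m : ℕ) {t : ℝ} (ht : t ∈ Set.Ico 0 T)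
    {l : Filter ℝ} (hl : Tendsto (fun x : ℝ => 1 + x ^ 2) l atTop) :
    Tendsto (fun x => iteratedDeriv m (fun x' => v t x') x) l (𝓝 0) := by
  obtain ⟨C, hC⟩ := decay2_of_decay h m ht
  exact squeeze_zero_norm (fun x => hC x) (Tendsto.div_atTop tendsto_const_nhds hl)

end Decay

section Boundary

variable {T : ℝ} {u : ℝ → ℝ → ℝ}

lemma slice_contDiff {s : Set ℝ} (hu : ContDiffOn ℝ (⊤ : ℕ∞) (Function.uncurry u) (s ×ˢ Set.univ))
    {t : ℝ} (ht : t ∈ s) : ContDiff ℝ (⊤ : ℕ∞) (u t) := by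
  rw [← contDiffOn_univ]
  exact ContDiffOn.congr
    (hu.comp (((contDiff_const (c := t)).prodMk contDiff_id).contDiffOn)
      (fun x _ => ⟨ht, mem_univ x⟩)) (fun x _ => rfl)

lemma pdx_eq_fderivWithin (hu : ContDiffOn ℝ (⊤ : ℕ∞) (Function.uncurry u) (Set.Ico 0 T ×ˢ Set.univ))
    {t : ℝ} (ht : t ∈ Set.Ico 0 T) (x : ℝ) :
    pdx u t x
      = fderivWithin ℝ (Function.uncurry u) (Set.Ico 0 T ×ˢ Set.univ) (t, x) ((0 : ℝ), (1 : ℝ)) := by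
  have hdiff : DifferentiableWithinAt ℝ (Function.uncurry u) (Set.Ico 0 T ×ˢ Set.univ) (t, x) :=
    (hu.differentiableOn (by simp)) _ ⟨ht, mem_univ x⟩
  have hline : HasDerivAt (fun x' : ℝ => ((t, x') : ℝ × ℝ)) ((0 : ℝ), (1 : ℝ)) x := by
    simpa using (hasDerivAt_const x t).prodMk (hasDerivAt_id x)
  have hc := hdiff.hasFDerivWithinAt.comp_hasDerivWithinAt x
    (hline.hasDerivWithinAt (s := Set.univ))
    (fun x' (_ : x' ∈ Set.univ) => (⟨ht, mem_univ x'⟩ : ((t, x') : ℝ × ℝ) ∈ Set.Ico 0 T ×ˢ Set.univ))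
  have hd : HasDerivAt (fun x' => u t x')
      (fderivWithin ℝ (Function.uncurry u) (Set.Ico 0 T ×ˢ Set.univ) (t, x) ((0 : ℝ), (1 : ℝ))) x :=
    hasDerivWithinAt_univ.mp (by simpa [Function.comp_def] using hc)
  exact hd.deriv

lemma pdx_continuousWithinAt (hT : 0 < T)
    (hu : ContDiffOn ℝ (⊤ : ℕ∞) (Function.uncurry u) (Set.Ico 0 T ×ˢ Set.univ))
    {t₀ : ℝ} (ht₀ : t₀ ∈ Set.Ico 0 T) (x : ℝ) :
    ContinuousWithinAt (fun t => pdx u t x) (Set.Ico 0 T) t₀ := by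
  have hS : UniqueDiffOn ℝ (Set.Ico 0 T ×ˢ (Set.univ : Set ℝ)) :=
    (uniqueDiffOn_Ico 0 T).prod uniqueDiffOn_univ
  have hcont : ContinuousOn
      (fun p => fderivWithin ℝ (Function.uncurry u) (Set.Ico 0 T ×ˢ Set.univ) p ((0 : ℝ), (1 : ℝ)))
      (Set.Ico 0 T ×ˢ Set.univ) :=
    (ContinuousLinearMap.apply ℝ ℝ ((0 : ℝ), (1 : ℝ))).continuous.comp_continuousOn
      (hu.continuousOn_fderivWithin hS (by simp))
  have hmap : ContinuousWithinAt (fun t => ((t, x) : ℝ × ℝ)) (Set.Ico 0 T) t₀ :=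
    (continuous_id.prodMk continuous_const).continuousWithinAt
  have hcomp := (hcont _ ⟨ht₀, mem_univ x⟩).comp hmap (fun t ht => ⟨ht, mem_univ x⟩)
  exact hcomp.congr (fun t ht => pdx_eq_fderivWithin hu ht x)
    (pdx_eq_fderivWithin hu ht₀ x)

end Boundary

lemma hasDerivAt_Gfun {g : ℝ → ℝ} (hg : ContDiff ℝ (⊤ : ℕ∞) g) (y : ℝ) :
    HasDerivAt (fun z => ∫ s in (0:ℝ)..z, s * deriv g s) (y * deriv g y) y := by
  have hcont : Continuous (fun s : ℝ => s * deriv g s) :=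
    continuous_id.mul (hg.continuous_deriv (by simp))
  exact intervalIntegral.integral_hasDerivAt_right (hcont.intervalIntegrable _ _)
    (hcont.stronglyMeasurableAtFilter _ _) hcont.continuousAt

section MoreHelpers

variable {T : ℝ} {v : ℝ → ℝ → ℝ}

lemma bound0_of_decay (h : LocUnifRapidDecay T v) (m : ℕ) {t : ℝ} (ht : t ∈ Set.Ico 0 T) :
    ∃ C : ℝ, ∀ x : ℝ, |iteratedDeriv m (fun x' => v t x') x| ≤ C := by
  obtain ⟨C, hC⟩ := bound_of_decay h 0 m ht
  exact ⟨C, fun x => by simpa using hC x⟩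

lemma bound0_of_decay_unif (h : LocUnifRapidDecay T v) (m : ℕ) {t₀ : ℝ}
    (ht₀ : t₀ ∈ Set.Ico 0 T) :
    ∃ ε > 0, ∃ C : ℝ, ∀ t ∈ Set.Ico (0:ℝ) T, |t - t₀| < ε →
      ∀ x : ℝ, |iteratedDeriv m (fun x' => v t x') x| ≤ C := by
  obtain ⟨ε, hε, C, hC⟩ := h 0 m t₀ ht₀
  exact ⟨ε, hε, C, fun t ht hd x => by simpa using hC t ht hd x⟩

lemma decay2_of_decay_unif (h : LocUnifRapidDecay T v) (m : ℕ) {t₀ : ℝ}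
    (ht₀ : t₀ ∈ Set.Ico 0 T) :
    ∃ ε > 0, ∃ C : ℝ, ∀ t ∈ Set.Ico (0:ℝ) T, |t - t₀| < ε →
      ∀ x : ℝ, |iteratedDeriv m (fun x' => v t x') x| ≤ C / (1 + x ^ 2) := by
  obtain ⟨ε₀, hε₀, C0, hC0⟩ := h 0 m t₀ ht₀
  obtain ⟨ε₂, hε₂, C2, hC2⟩ := h 2 m t₀ ht₀
  refine ⟨min ε₀ ε₂, lt_min hε₀ hε₂, C0 + C2, fun t ht hd x => ?_⟩
  have hx : (0 : ℝ) < 1 + x ^ 2 := by positivity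
  rw [le_div_iff₀ hx]
  have h0' := hC0 t ht (lt_of_lt_of_le hd (min_le_left _ _)) x
  have h2' := hC2 t ht (lt_of_lt_of_le hd (min_le_right _ _)) x
  simp only [pow_zero, one_mul] at h0'
  have hsq : |x| ^ 2 = x ^ 2 := sq_abs x
  nlinarith [abs_nonneg (iteratedDeriv m (fun x' => v t x') x)]

lemma iter0_eq (t : ℝ) : iteratedDeriv 0 (fun x' => v t x') = fun x => v t x := by
  simp [iteratedDeriv_zero]

lemma iter1_eq (t : ℝ) : iteratedDeriv 1 (fun x' => v t x') = fun x => pdx v t x := by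
  rw [iteratedDeriv_one]; rfl

lemma iter2_eq (t : ℝ) : iteratedDeriv 2 (fun x' => v t x') = fun x => pdx (pdx v) t x := by
  show iteratedDeriv (1 + 1) _ = _
  rw [iteratedDeriv_succ, iteratedDeriv_one]; rfl

lemma iter3_eq (t : ℝ) : iteratedDeriv 3 (fun x' => v t x') = fun x => pdx (pdx (pdx v)) t x := by
  show iteratedDeriv (2 + 1) _ = _
  rw [iteratedDeriv_succ, iter2_eq]; rfl

end MoreHelpers

lemma mul_bound {a b A B : ℝ} (ha : |a| ≤ A) (hb : |b| ≤ B) : |a * b| ≤ A * B := by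
  rw [abs_mul]
  exact mul_le_mul ha hb (abs_nonneg b) ((abs_nonneg a).trans ha)

lemma cmul_bound {c a C : ℝ} (h : |a| ≤ C) : |c * a| ≤ |c| * C := by
  rw [abs_mul]
  exact mul_le_mul_of_nonneg_left h (abs_nonneg c)

lemma tendsto_zero_mul_bound {f h : ℝ → ℝ} {l : Filter ℝ} {C : ℝ}
    (hf : Tendsto f l (𝓝 0)) (hC : ∀ x, |h x| ≤ C) :
    Tendsto (fun x => f x * h x) l (𝓝 0) := by
  have h1 : ∀ x, ‖f x * h x‖ ≤ |f x| * C := fun x => by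
    rw [Real.norm_eq_abs, abs_mul]
    exact mul_le_mul_of_nonneg_left (hC x) (abs_nonneg (f x))
  have h2 : Tendsto (fun x => |f x| * C) l (𝓝 0) := by
    have : Tendsto (fun x => |f x|) l (𝓝 0) := by simpa using hf.abs
    simpa using this.mul_const C
  exact squeeze_zero_norm h1 h2


/-- Energy identity: for a smooth, rapidly decreasing solution `(u, ρ)` on `[0,T)` of the
weakly dissipative generalized two-component Novikov system, the `H¹`-energy of `u` decays
exactly like `e^{-2λt}`. -/
theorem energy_identity (T : ℝ) (hT : 0 < T) (g : ℝ → ℝ) (hg : ContDiff ℝ (⊤ : ℕ∞) g)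
    (hg0 : g 0 = 0) (k : ℝ) (hk : k ≠ 0) (lam : ℝ) (hlam : 0 ≤ lam)
    (u ρ : ℝ → ℝ → ℝ)
    (hu_smooth : ContDiffOn ℝ (⊤ : ℕ∞) (Function.uncurry u) (Set.Ico 0 T ×ˢ Set.univ))
    (hρ_smooth : ContDiffOn ℝ (⊤ : ℕ∞) (Function.uncurry ρ) (Set.Ico 0 T ×ˢ Set.univ))
    (hu_decay : ∀ j : ℕ, LocUnifRapidDecay T
      (fun t x => iteratedDeriv j (fun t' => u t' x) t))
    (hρ_decay : ∀ j : ℕ, LocUnifRapidDecay T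
      (fun t x => iteratedDeriv j (fun t' => ρ t' x) t))
    (heq1 : ∀ t ∈ Set.Ico (0 : ℝ) T, ∀ x : ℝ,
      pdt u t x - pdt (pdx (pdx u)) t x + pdx (fun t x => g (u t x)) t x
        + lam * (u t x - pdx (pdx u) t x)
      = k * (3 * u t x * pdx u t x * pdx (pdx u) t x
              + (u t x) ^ 2 * pdx (pdx (pdx u)) t x)
        + k * ρ t x * pdx (fun t x => u t x * ρ t x) t x)
    (heq2 : ∀ t ∈ Set.Ico (0 : ℝ) T, ∀ x : ℝ,
      pdt ρ t x + k * (u t x) ^ 2 * pdx ρ t x + k * ρ t x * u t x * pdx u t x = 0) :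
    ∀ t ∈ Set.Ico (0 : ℝ) T,
      ∫ x : ℝ, ((u t x) ^ 2 + (pdx u t x) ^ 2)
        = Real.exp (-2 * lam * t) * ∫ x : ℝ, ((u 0 x) ^ 2 + (pdx u 0 x) ^ 2) := by
  clear heq2
  -- basic sets
  set O : Set (ℝ × ℝ) := Set.Ioo (0:ℝ) T ×ˢ Set.univ with hOdef
  have hO : IsOpen O := isOpen_Ioo.prod isOpen_univ
  have hOS : O ⊆ Set.Ico 0 T ×ˢ Set.univ := prod_mono_left Ioo_subset_Ico_self
  have huO : ContDiffOn ℝ (⊤ : ℕ∞) (Function.uncurry u) O := hu_smooth.mono hOS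
  have hρO : ContDiffOn ℝ (⊤ : ℕ∞) (Function.uncurry ρ) O := hρ_smooth.mono hOS
  have hu1 : ContDiffOn ℝ (⊤ : ℕ∞) (Function.uncurry (pdx u)) O := contDiffOn_pdx hO huO
  have hu2 : ContDiffOn ℝ (⊤ : ℕ∞) (Function.uncurry (pdx (pdx u))) O := contDiffOn_pdx hO hu1
  have hv : ContDiffOn ℝ (⊤ : ℕ∞) (Function.uncurry (pdt u)) O := contDiffOn_pdt hO huO
  have hw : ContDiffOn ℝ (⊤ : ℕ∞) (Function.uncurry (pdt (pdx u))) O := contDiffOn_pdt hO hu1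
  have hmem : ∀ {t : ℝ}, t ∈ Set.Ioo (0:ℝ) T → ∀ x : ℝ, ((t, x) : ℝ × ℝ) ∈ O :=
    fun ht x => ⟨ht, mem_univ x⟩
  -- decay hypotheses in convenient form
  have hud0 : LocUnifRapidDecay T u := by
    have := hu_decay 0; simpa [iteratedDeriv_zero] using this
  have hud1 : LocUnifRapidDecay T (pdt u) := by
    have := hu_decay 1; simp only [iteratedDeriv_one] at this; exact this
  have hρd0 : LocUnifRapidDecay T ρ := by
    have := hρ_decay 0; simpa [iteratedDeriv_zero] using this
  -- energy and integrand
  set Fn : ℝ → ℝ → ℝ := fun t x => (u t x) ^ 2 + (pdx u t x) ^ 2 with hFndef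
  set E : ℝ → ℝ := fun t => ∫ x : ℝ, Fn t x with hEdef
  -- continuity of slices on [0,T)
  have hslice : ∀ t ∈ Set.Ico (0:ℝ) T, Continuous (u t) ∧ Continuous (pdx u t) := by
    intro t ht
    have h1 : ContDiff ℝ (⊤ : ℕ∞) (u t) := slice_contDiff hu_smooth ht
    exact ⟨h1.continuous, h1.continuous_deriv (by simp)⟩
  have hFnmeas : ∀ t ∈ Set.Ico (0:ℝ) T, Continuous (Fn t) := by
    intro t ht
    obtain ⟨h1, h2⟩ := hslice t ht
    exact (h1.pow 2).add (h2.pow 2)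
  -- integrability of Fn t for t ∈ [0,T)
  have hFnint : ∀ t ∈ Set.Ico (0:ℝ) T, Integrable (Fn t) := by
    intro t ht
    obtain ⟨Du, hDu⟩ := bound0_of_decay hud0 0 ht
    obtain ⟨Du1, hDu1⟩ := bound0_of_decay hud0 1 ht
    obtain ⟨Cu, hCu⟩ := decay2_of_decay hud0 0 ht
    obtain ⟨Cu1, hCu1⟩ := decay2_of_decay hud0 1 ht
    simp only [iter0_eq] at hDu hCu
    simp only [iter1_eq] at hDu1 hCu1
    refine Integrable.mono' ((integrable_inv_one_add_sq).const_mul (Du * Cu + Du1 * Cu1))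
      (hFnmeas t ht).aestronglyMeasurable (Filter.Eventually.of_forall fun x => ?_)
    have hx : (0:ℝ) < 1 + x ^ 2 := by positivity
    have e1 : (u t x) ^ 2 ≤ Du * (Cu / (1 + x ^ 2)) := by
      rw [← sq_abs, sq]
      exact mul_le_mul (hDu x) (hCu x) (abs_nonneg _) ((abs_nonneg _).trans (hDu x))
    have e2 : (pdx u t x) ^ 2 ≤ Du1 * (Cu1 / (1 + x ^ 2)) := by
      rw [← sq_abs, sq]
      exact mul_le_mul (hDu1 x) (hCu1 x) (abs_nonneg _) ((abs_nonneg _).trans (hDu1 x))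
    have e3 : Du * (Cu / (1 + x ^ 2)) + Du1 * (Cu1 / (1 + x ^ 2))
        = (Du * Cu + Du1 * Cu1) * (1 + x ^ 2)⁻¹ := by
      field_simp
      try ring
    have hnn : (0:ℝ) ≤ Fn t x := by positivity
    rw [Real.norm_eq_abs, abs_of_nonneg hnn]
    simp only [hFndef]
    linarith
  -- derivative of E on (0,T)
  set Fd : ℝ → ℝ → ℝ := fun s x =>
    2 * (u s x * pdt u s x) + 2 * (pdx u s x * pdt (pdx u) s x) with hFddef
  have hE' : ∀ t ∈ Set.Ioo (0:ℝ) T, HasDerivAt E (-(2 * lam) * E t) t := by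
    intro t₀ ht₀
    have ht₀' : t₀ ∈ Set.Ico 0 T := ⟨le_of_lt ht₀.1, ht₀.2⟩
    -- uniform bounds near t₀
    obtain ⟨ε0, hε0, Du, hDu⟩ := bound0_of_decay_unif hud0 0 ht₀'
    obtain ⟨ε1, hε1, Du1, hDu1⟩ := bound0_of_decay_unif hud0 1 ht₀'
    obtain ⟨ε2, hε2, Cv, hCv⟩ := decay2_of_decay_unif hud1 0 ht₀'
    obtain ⟨ε3, hε3, Cw, hCw⟩ := decay2_of_decay_unif hud1 1 ht₀'
    simp only [iter0_eq] at hDu hCv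
    simp only [iter1_eq] at hDu1 hCw
    set ε := min (min ε0 ε1) (min (min ε2 ε3) (min t₀ (T - t₀))) with hεdef
    have hεpos : 0 < ε := lt_min (lt_min hε0 hε1)
      (lt_min (lt_min hε2 hε3) (lt_min ht₀.1 (by linarith [ht₀.2])))
    have hball : ∀ s ∈ Metric.ball t₀ ε, s ∈ Set.Ioo (0:ℝ) T ∧
        |s - t₀| < ε0 ∧ |s - t₀| < ε1 ∧ |s - t₀| < ε2 ∧ |s - t₀| < ε3 := by
      intro s hs
      rw [Metric.mem_ball, Real.dist_eq, hεdef] at hs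
      simp only [lt_min_iff] at hs
      obtain ⟨⟨h0', h1'⟩, ⟨h2', h3'⟩, h4', h5'⟩ := hs
      have ha := abs_lt.mp h4'
      have hb := abs_lt.mp h5'
      exact ⟨⟨by linarith [ha.1], by linarith [hb.2]⟩, h0', h1', h2', h3'⟩
    -- parametric differentiation under the integral sign
    have hpar := hasDerivAt_integral_of_dominated_loc_of_deriv_le (μ := volume)
      (F := Fn) (F' := Fd) (x₀ := t₀)
      (bound := fun x => (|(2:ℝ)| * (Du * Cv) + |(2:ℝ)| * (Du1 * Cw)) * (1 + x ^ 2)⁻¹)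
      (Metric.ball_mem_nhds t₀ hεpos) ?_ (hFnint t₀ ht₀') ?_ ?_ ((integrable_inv_one_add_sq).const_mul _) ?_
    · obtain ⟨hFd_int, hEderiv⟩ := hpar
      -- the integral of the perfect derivative vanishes
      have hψint : Integrable (fun x => Fd t₀ x + 2 * lam * Fn t₀ x) :=
        hFd_int.add ((hFnint t₀ ht₀').const_mul (2 * lam))
      have hψzero : ∫ x : ℝ, (Fd t₀ x + 2 * lam * Fn t₀ x) = 0 := by
        obtain ⟨Dw', hDw'⟩ := bound0_of_decay hud1 1 ht₀'
        obtain ⟨Du2, hDu2⟩ := bound0_of_decay hud0 2 ht₀'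
        obtain ⟨Dρ, hDρ⟩ := bound0_of_decay hρd0 0 ht₀'
        simp only [iter1_eq] at hDw'
        simp only [iter2_eq] at hDu2
        simp only [iter0_eq] at hDρ
        have hDw : ∀ x, |pdt (pdx u) t₀ x| ≤ Dw' := fun x => by
          rw [clairaut hO huO (hmem ht₀ x)]; exact hDw' x
        have hDub : ∀ x, |u t₀ x| ≤ Du := fun x => hDu t₀ ht₀' (by simpa using hε0) x
        have hDu1b : ∀ x, |pdx u t₀ x| ≤ Du1 := fun x => hDu1 t₀ ht₀' (by simpa using hε1) x
        set Gf : ℝ → ℝ := fun z => ∫ s in (0:ℝ)..z, s * deriv g s with hGfdef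
        set Φ : ℝ → ℝ := fun x => u t₀ x *
            (2 * pdt (pdx u) t₀ x + 2 * lam * pdx u t₀ x
              + 2 * k * ((u t₀ x * u t₀ x) * pdx (pdx u) t₀ x)
              + k * (u t₀ x * (ρ t₀ x * ρ t₀ x)))
          - 2 * Gf (u t₀ x) with hΦdef
        have hΦderiv : ∀ x : ℝ, HasDerivAt Φ (Fd t₀ x + 2 * lam * Fn t₀ x) x := by
          intro x
          have hp := hmem ht₀ x
          have hU := pdx_slice hO huO hp
          have hU1 := pdx_slice hO hu1 hp
          have hU2 := pdx_slice hO hu2 hp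
          have hR := pdx_slice hO hρO hp
          have hW : HasDerivAt (fun x' => pdt (pdx u) t₀ x') (pdt (pdx (pdx u)) t₀ x) x := by
            have h := pdx_slice hO hw hp
            rwa [← clairaut hO hu1 hp] at h
          have hGc : HasDerivAt Gf (u t₀ x * deriv g (u t₀ x)) (u t₀ x) :=
            hasDerivAt_Gfun hg _
          have hGu := hGc.comp x hU
          have hgd : HasDerivAt g (deriv g (u t₀ x)) (u t₀ x) :=
            ((hg.differentiable (by simp)) (u t₀ x)).hasDerivAt
          have hgu := hgd.comp x hU
          have e1 : pdx (fun t x => g (u t x)) t₀ x = deriv g (u t₀ x) * pdx u t₀ x :=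
            hgu.deriv
          have e2 : pdx (fun t x => u t x * ρ t x) t₀ x
              = pdx u t₀ x * ρ t₀ x + u t₀ x * pdx ρ t₀ x := (hU.mul hR).deriv
          have heqx := heq1 t₀ ht₀' x
          rw [e1, e2] at heqx
          have hA := (((hW.const_mul 2).add (hU1.const_mul (2 * lam))).add
            (((hU.mul hU).mul hU2).const_mul (2 * k))).add
            ((hU.mul (hR.mul hR)).const_mul k)
          have hfull := (hU.mul hA).sub (hGu.const_mul 2)
          rw [hΦdef]
          refine hfull.congr_deriv ?_; symm
          simp only [hFddef, hFndef, Pi.add_apply, Pi.mul_apply]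
          linear_combination (2 * u t₀ x) * heqx
        have hΦtend : ∀ l : Filter ℝ, Tendsto (fun x : ℝ => 1 + x ^ 2) l atTop →
            Tendsto Φ l (𝓝 0) := by
          intro l hl
          have hub : Tendsto (fun x => u t₀ x) l (𝓝 0) := by
            have := tendsto_zero_of_decay hud0 0 ht₀' hl
            rwa [iter0_eq] at this
          have hAbd : ∀ x, |2 * pdt (pdx u) t₀ x + 2 * lam * pdx u t₀ x
              + 2 * k * ((u t₀ x * u t₀ x) * pdx (pdx u) t₀ x)
              + k * (u t₀ x * (ρ t₀ x * ρ t₀ x))|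
              ≤ |(2:ℝ)| * Dw' + |2 * lam| * Du1 + |2 * k| * ((Du * Du) * Du2)
                + |k| * (Du * (Dρ * Dρ)) := by
            intro x
            have t1 : |2 * pdt (pdx u) t₀ x| ≤ |(2:ℝ)| * Dw' := cmul_bound (hDw x)
            have t2 : |2 * lam * pdx u t₀ x| ≤ |2 * lam| * Du1 := cmul_bound (hDu1b x)
            have t3 : |2 * k * ((u t₀ x * u t₀ x) * pdx (pdx u) t₀ x)|
                ≤ |2 * k| * ((Du * Du) * Du2) :=
              cmul_bound (mul_bound (mul_bound (hDub x) (hDub x)) (hDu2 x))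
            have t4 : |k * (u t₀ x * (ρ t₀ x * ρ t₀ x))| ≤ |k| * (Du * (Dρ * Dρ)) :=
              cmul_bound (mul_bound (hDub x) (mul_bound (hDρ x) (hDρ x)))
            have habs : ∀ a b c d : ℝ, |a + b + c + d| ≤ |a| + |b| + |c| + |d| := by
              intro a b c d
              calc |a + b + c + d| ≤ |a + b + c| + |d| := abs_add_le _ _
                _ ≤ |a| + |b| + |c| + |d| := add_le_add (abs_add_three _ _ _) le_rfl
            have := habs (2 * pdt (pdx u) t₀ x) (2 * lam * pdx u t₀ x)
              (2 * k * ((u t₀ x * u t₀ x) * pdx (pdx u) t₀ x))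
              (k * (u t₀ x * (ρ t₀ x * ρ t₀ x)))
            linarith
          have hmul := tendsto_zero_mul_bound hub hAbd
          have hGf0 : Gf 0 = 0 := intervalIntegral.integral_same
          have hGfc : Tendsto Gf (𝓝 0) (𝓝 0) := by
            have h : ContinuousAt Gf 0 := (hasDerivAt_Gfun hg 0).continuousAt
            simpa only [hGf0] using h.tendsto
          have hGfu : Tendsto (fun x => Gf (u t₀ x)) l (𝓝 0) := hGfc.comp hub
          have h2 : Tendsto (fun x => 2 * Gf (u t₀ x)) l (𝓝 0) := by
            simpa using hGfu.const_mul (2:ℝ)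
          rw [hΦdef]
          simpa using hmul.sub h2
        have hIoi := integral_Ioi_of_hasDerivAt_of_tendsto' (a := 0) (f := Φ)
          (f' := fun x => Fd t₀ x + 2 * lam * Fn t₀ x)
          (fun x _ => hΦderiv x) hψint.integrableOn
          (hΦtend atTop tendsto_one_add_sq_atTop)
        have hIic := integral_Iic_of_hasDerivAt_of_tendsto' (a := 0) (f := Φ)
          (f' := fun x => Fd t₀ x + 2 * lam * Fn t₀ x)
          (fun x _ => hΦderiv x) hψint.integrableOn
          (hΦtend atBot tendsto_one_add_sq_atBot)
        have hsplit := intervalIntegral.integral_Iic_add_Ioi (b := 0)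
          (f := fun x => Fd t₀ x + 2 * lam * Fn t₀ x) hψint.integrableOn hψint.integrableOn
        rw [← hsplit, hIoi, hIic]
        ring
      have hsum : ∫ x : ℝ, (Fd t₀ x + 2 * lam * Fn t₀ x)
          = (∫ x : ℝ, Fd t₀ x) + 2 * lam * ∫ x : ℝ, Fn t₀ x := by
        rw [integral_add hFd_int ((hFnint t₀ ht₀').const_mul (2 * lam)),
          integral_const_mul]
      have hval : ∫ x : ℝ, Fd t₀ x = -(2 * lam) * E t₀ := by
        rw [hsum] at hψzero
        simp only [hEdef]
        linarith
      rw [← hval]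
      exact hEderiv
    · filter_upwards [Ioo_mem_nhds ht₀.1 ht₀.2] with s hs
      exact (hFnmeas s ⟨le_of_lt hs.1, hs.2⟩).aestronglyMeasurable
    · -- measurability of Fd t₀
      have hvO : ContDiffOn ℝ (⊤ : ℕ∞) (Function.uncurry (pdt u)) (Set.Ioo (0:ℝ) T ×ˢ Set.univ) := by
        rw [← hOdef]; exact hv
      have hwO : ContDiffOn ℝ (⊤ : ℕ∞) (Function.uncurry (pdt (pdx u))) (Set.Ioo (0:ℝ) T ×ˢ Set.univ) := by
        rw [← hOdef]; exact hw
      have c1 : Continuous (pdt u t₀) := (slice_contDiff hvO ht₀).continuous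
      have c2 : Continuous (pdt (pdx u) t₀) := (slice_contDiff hwO ht₀).continuous
      obtain ⟨c3, c4⟩ := hslice t₀ ht₀'
      exact ((continuous_const.mul (c3.mul c1)).add (continuous_const.mul (c4.mul c2))).aestronglyMeasurable
    · -- uniform bound on Fd
      refine Filter.Eventually.of_forall fun x => fun s hs => ?_
      obtain ⟨hsIoo, hd0, hd1, hd2, hd3⟩ := hball s hs
      have hsIco : s ∈ Set.Ico (0:ℝ) T := ⟨le_of_lt hsIoo.1, hsIoo.2⟩
      have b0 := hDu s hsIco hd0 x
      have b1 := hDu1 s hsIco hd1 x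
      have b2 := hCv s hsIco hd2 x
      have b3 : |pdt (pdx u) s x| ≤ Cw / (1 + x ^ 2) := by
        rw [clairaut hO huO (hmem hsIoo x)]
        exact hCw s hsIco hd3 x
      have hx : (0:ℝ) < 1 + x ^ 2 := by positivity
      have e1 : |2 * (u s x * pdt u s x)| ≤ |(2:ℝ)| * (Du * (Cv / (1 + x ^ 2))) :=
        cmul_bound (mul_bound b0 b2)
      have e2 : |2 * (pdx u s x * pdt (pdx u) s x)| ≤ |(2:ℝ)| * (Du1 * (Cw / (1 + x ^ 2))) :=
        cmul_bound (mul_bound b1 b3)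
      have e3 : |(2:ℝ)| * (Du * (Cv / (1 + x ^ 2))) + |(2:ℝ)| * (Du1 * (Cw / (1 + x ^ 2)))
          = (|(2:ℝ)| * (Du * Cv) + |(2:ℝ)| * (Du1 * Cw)) * (1 + x ^ 2)⁻¹ := by
        field_simp
        try ring
      rw [Real.norm_eq_abs]
      calc |Fd s x| ≤ |2 * (u s x * pdt u s x)| + |2 * (pdx u s x * pdt (pdx u) s x)| :=
            abs_add_le _ _
        _ ≤ |(2:ℝ)| * (Du * (Cv / (1 + x ^ 2))) + |(2:ℝ)| * (Du1 * (Cw / (1 + x ^ 2))) :=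
            add_le_add e1 e2
        _ = _ := e3
    · -- differentiability in time
      refine Filter.Eventually.of_forall fun x => fun s hs => ?_
      obtain ⟨hsIoo, -⟩ := hball s hs
      have hA := pdt_slice hO huO (hmem hsIoo x)
      have hB := pdt_slice hO hu1 (hmem hsIoo x)
      have := (hA.pow 2).add (hB.pow 2)
      refine this.congr_deriv ?_
      push_cast
      ring
  -- continuity of E at 0 within [0,T)
  have h0mem : (0:ℝ) ∈ Set.Ico (0:ℝ) T := ⟨le_refl 0, hT⟩
  have hE0 : ContinuousWithinAt E (Set.Ico 0 T) 0 := by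
    obtain ⟨ε0, hε0, Du, hDu⟩ := bound0_of_decay_unif hud0 0 h0mem
    obtain ⟨ε1, hε1, Du1, hDu1⟩ := bound0_of_decay_unif hud0 1 h0mem
    obtain ⟨ε2, hε2, Cu, hCu⟩ := decay2_of_decay_unif hud0 0 h0mem
    obtain ⟨ε3, hε3, Cu1, hCu1⟩ := decay2_of_decay_unif hud0 1 h0mem
    simp only [iter0_eq] at hDu hCu
    simp only [iter1_eq] at hDu1 hCu1
    set ε := min (min ε0 ε1) (min ε2 ε3) with hεdef
    have hεpos : 0 < ε := lt_min (lt_min hε0 hε1) (lt_min hε2 hε3)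
    have hball : ∀ᶠ s in 𝓝 (0:ℝ), |s - 0| < ε := by
      have := Metric.ball_mem_nhds (0:ℝ) hεpos
      filter_upwards [this] with s hs
      rwa [Metric.mem_ball, Real.dist_eq] at hs
    apply continuousWithinAt_of_dominated
      (bound := fun x => (Du * Cu + Du1 * Cu1) * (1 + x ^ 2)⁻¹)
    · filter_upwards [eventually_mem_nhdsWithin] with s hs
      exact (hFnmeas s hs).aestronglyMeasurable
    · filter_upwards [eventually_mem_nhdsWithin, hball.filter_mono nhdsWithin_le_nhds]
        with s hs hd
      refine Filter.Eventually.of_forall fun x => ?_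
      simp only [hεdef, lt_min_iff] at hd
      have b0 := hDu s hs hd.1.1 x
      have b1 := hDu1 s hs hd.1.2 x
      have c0 := hCu s hs hd.2.1 x
      have c1 := hCu1 s hs hd.2.2 x
      have hx : (0:ℝ) < 1 + x ^ 2 := by positivity
      have e1 : (u s x) ^ 2 ≤ Du * (Cu / (1 + x ^ 2)) := by
        rw [← sq_abs, sq]
        exact mul_le_mul b0 c0 (abs_nonneg _) ((abs_nonneg _).trans b0)
      have e2 : (pdx u s x) ^ 2 ≤ Du1 * (Cu1 / (1 + x ^ 2)) := by
        rw [← sq_abs, sq]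
        exact mul_le_mul b1 c1 (abs_nonneg _) ((abs_nonneg _).trans b1)
      have e3 : Du * (Cu / (1 + x ^ 2)) + Du1 * (Cu1 / (1 + x ^ 2))
          = (Du * Cu + Du1 * Cu1) * (1 + x ^ 2)⁻¹ := by
        field_simp
        try ring
      have hnn : (0:ℝ) ≤ Fn s x := by positivity
      rw [Real.norm_eq_abs, abs_of_nonneg hnn]
      simp only [hFndef]
      linarith
    · exact (integrable_inv_one_add_sq).const_mul _
    · refine Filter.Eventually.of_forall fun x => ?_
      have hcu : ContinuousWithinAt (fun s => u s x) (Set.Ico 0 T) 0 := by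
        have h1 := (hu_smooth.continuousOn).continuousWithinAt
          (x := ((0:ℝ), x)) ⟨h0mem, mem_univ x⟩
        have hmap : ContinuousWithinAt (fun s : ℝ => ((s, x) : ℝ × ℝ)) (Set.Ico 0 T) 0 :=
          (continuous_id.prodMk continuous_const).continuousWithinAt
        exact ContinuousWithinAt.comp (x := (0:ℝ)) (f := fun s : ℝ => ((s, x) : ℝ × ℝ))
          (g := Function.uncurry u) h1 hmap (fun s hs => ⟨hs, mem_univ x⟩)
      have hcd : ContinuousWithinAt (fun s => pdx u s x) (Set.Ico 0 T) 0 :=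
        pdx_continuousWithinAt hT hu_smooth h0mem x
      exact (hcu.pow 2).add (hcd.pow 2)
  -- conclusion via the ODE
  intro t ht
  show E t = Real.exp (-2 * lam * t) * E 0
  rcases eq_or_lt_of_le ht.1 with h0 | h0
  · rw [← h0]; simp
  -- t > 0
  set H : ℝ → ℝ := fun s => Real.exp (2 * lam * s) * E s with hHdef
  have hH : ∀ s ∈ Set.Ioo (0:ℝ) T, HasDerivAt H 0 s := by
    intro s hs
    have hexp : HasDerivAt (fun s' => Real.exp (2 * lam * s')) (Real.exp (2 * lam * s) * (2 * lam)) s := by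
      have : HasDerivAt (fun s' : ℝ => 2 * lam * s') (2 * lam) s := by
        simpa using (hasDerivAt_id s).const_mul (2 * lam)
      exact this.exp
    have := hexp.mul (hE' s hs)
    refine this.congr_deriv ?_
    ring
  have hconst : ∀ s ∈ Set.Ioc (0:ℝ) t, H t = H s := by
    intro s hs
    have hsub : Set.Icc s t ⊆ Set.Ioo (0:ℝ) T := fun y hy =>
      ⟨lt_of_lt_of_le hs.1 hy.1, lt_of_le_of_lt hy.2 ht.2⟩
    have hcont : ContinuousOn H (Set.Icc s t) := fun y hy =>
      (hH y (hsub hy)).continuousAt.continuousWithinAt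
    have hder : ∀ y ∈ Set.Ico s t, HasDerivWithinAt H 0 (Set.Ici y) y := fun y hy =>
      (hH y (hsub ⟨hy.1, le_of_lt hy.2⟩)).hasDerivWithinAt
    exact constant_of_has_deriv_right_zero hcont hder t (right_mem_Icc.mpr hs.2)
  have hHcont : ContinuousWithinAt H (Set.Ico 0 T) 0 :=
    ((Real.continuous_exp.comp (continuous_const.mul continuous_id)).continuousWithinAt).mul hE0
  have hne : (𝓝[Set.Ioo (0:ℝ) t] (0:ℝ)).NeBot := left_nhdsWithin_Ioo_neBot h0
  have hsub2 : Set.Ioo (0:ℝ) t ⊆ Set.Ico 0 T := fun y hy =>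
    ⟨le_of_lt hy.1, lt_trans hy.2 ht.2⟩
  have h1 : Tendsto H (𝓝[Set.Ioo (0:ℝ) t] 0) (𝓝 (H 0)) :=
    hHcont.tendsto.mono_left (nhdsWithin_mono 0 hsub2)
  have h2 : Tendsto H (𝓝[Set.Ioo (0:ℝ) t] 0) (𝓝 (H t)) := by
    apply tendsto_const_nhds.congr'
    filter_upwards [eventually_mem_nhdsWithin] with s hs
    exact hconst s ⟨hs.1, le_of_lt hs.2⟩
  have hkey : H t = H 0 := tendsto_nhds_unique h2 h1
  have hE0eq : Real.exp (2 * lam * t) * E t = E 0 := by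
    have : H 0 = E 0 := by simp [hHdef]
    rw [← this, ← hkey]
  have hexpinv : Real.exp (-2 * lam * t) * Real.exp (2 * lam * t) = 1 := by
    rw [← Real.exp_add]
    ring_nf
    exact Real.exp_zero
  calc E t = (Real.exp (-2 * lam * t) * Real.exp (2 * lam * t)) * E t := by
        rw [hexpinv, one_mul]
    _ = Real.exp (-2 * lam * t) * E 0 := by rw [mul_assoc, hE0eq]
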